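/- Let R be a ring with identity and m ≥ 1. Then S_{2m}(R) is isomorphic as a ring to the full m×m matrix ring M_m(R[C_2]) over the group algebra R[C_2]; an isomorphism is given by sending the matrix (a_{ij} + b_{ij}x)_{1≤i,j≤m} over R[C_2] (x a generator of C_2) to Σ_{i,j} a_{ij} f_{ij} + b_{ij} f_{i,2m+1-j}. -/

import Mathlib

/-- The set of centrosymmetric `n × n` matrices over `R`: matrices `a = (a i j)` with
`a i j = a i.rev j.rev` for all `i j : Fin n` (the 0-based version of the 1-based condition
`a_{ij} = a_{n+1-i, n+1-j}` for `1 ≤ i, j ≤ n`). -/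
def centroSet (R : Type*) [Ring R] (n : ℕ) : Set (Matrix (Fin n) (Fin n) R) :=
  {a | ∀ i j, a i j = a i.rev j.rev}

/-- The centrosymmetric matrix ring `S_n(R)`, as a subring of `M_n(R)`. -/
def centroSubring (R : Type*) [Ring R] (n : ℕ) : Subring (Matrix (Fin n) (Fin n) R) where
  carrier := centroSet R n
  zero_mem' := fun i j => by simp
  one_mem' := fun i j => by
    simp only [Matrix.one_apply, Fin.rev_inj]
  add_mem' := fun ha hb i j => by
    simp only [Matrix.add_apply]; rw [ha i j, hb i j]
  neg_mem' := fun ha i j => by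
    simp only [Matrix.neg_apply]; rw [ha i j]
  mul_mem' := by
    intro a b ha hb i j
    simp only [Matrix.mul_apply]
    calc ∑ k, a i k * b k j = ∑ k, a i.rev k.rev * b k.rev j.rev :=
          Finset.sum_congr rfl fun k _ => by rw [← ha i k, ← hb k j]
      _ = ∑ k, a i.rev k * b k j.rev :=
          Fintype.sum_bijective Fin.rev Fin.rev_involutive.bijective _ _ (fun k => rfl)

/-- The matrices `f_{ij}`: for `i ≠ j`, `f_{ij} = e_{ij} + e_{n+1-i, n+1-j}`, while
`f_{ii} = e_{ii} + σ_{i,n+1-i} e_{n+1-i,n+1-i}` with `σ` the anti-Kronecker delta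
(`σ_{ij} = 0` if `i = j` and `σ_{ij} = 1` otherwise); written 0-based using `Fin.rev`. -/
def fMat (R : Type*) [Ring R] (n : ℕ) (i j : Fin n) : Matrix (Fin n) (Fin n) R :=
  if i = j then
    Matrix.single i i 1 +
      (if i = i.rev then 0 else Matrix.single i.rev i.rev 1)
  else Matrix.single i j 1 + Matrix.single i.rev j.rev 1

/-!
Index `Fin (2 * m)` by `Fin m × C₂`, sending `(i, 1)` to `i` and `(i, x)` to `i.rev`, so that
`Fin.rev` becomes translation by the generator `x`. For any finite group `G`, the map
`M ↦ ((i, g), (j, h)) ↦ (M i j)(g⁻¹ h)` embeds `M_m(R[G])` as a ring into the square matrices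
over `R` indexed by `Fin m × G`, and its image consists of the matrices invariant under
simultaneous left translation of both `G`-coordinates. For `G = C₂` these are exactly the
centrosymmetric matrices, and the image `Σ_g e_{(i,g),(j,gt)}` of `t e_{ij}` is `f_{ij}` for
`t = 1` and `f_{i,2m+1-j}` for `t = x`.
-/

open MonoidAlgebra

lemma MonoidAlgebra.coeff_mul_eq_sum {R G : Type*} [Ring R] [Group G] [Fintype G]
    (x y : MonoidAlgebra R G) (g : G) :
    (x * y).coeff g = ∑ h, x.coeff h * y.coeff (h⁻¹ * g) := by
  rw [coeff_mul_apply_left, Finsupp.sum_fintype _ _ fun _ => zero_mul _]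

namespace Matrix

variable {R G ι : Type*} [Ring R] [Group G] [Fintype G] [DecidableEq G] [DecidableEq ι]

variable (R) in
def regularRepBasis (i j : ι) (t : G) : Matrix (ι × G) (ι × G) R :=
  ∑ g, single (i, g) (j, g * t) 1

lemma regularRepBasis_apply (i j : ι) (t : G) (p q : ι × G) :
    regularRepBasis R i j t p q = if i = p.1 ∧ j = q.1 ∧ t = p.2⁻¹ * q.2 then 1 else 0 := by
  obtain ⟨i', g⟩ := p
  obtain ⟨j', h⟩ := q
  simp [regularRepBasis, sum_apply, single_apply, and_and_and_comm (b := _ = g), ite_and,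
    eq_inv_mul_iff_mul_eq]

variable [Fintype ι]

variable (R G ι) in
def regularRep : Matrix ι ι (MonoidAlgebra R G) →+* Matrix (ι × G) (ι × G) R where
  toFun M := of fun p q => (M p.1 q.1).coeff (p.2⁻¹ * q.2)
  map_zero' := rfl
  map_add' _ _ := rfl
  map_one' := by
    ext ⟨i, g⟩ ⟨j, h⟩
    by_cases hij : i = j
    · subst hij
      simp [one_apply, one_def, Finsupp.single_apply, inv_mul_eq_one, eq_comm]
    · simp [one_apply, hij]
  map_mul' M N := by
    ext ⟨i, g⟩ ⟨k, l⟩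
    simp only [of_apply, mul_apply, coeff_sum, Finsupp.finsetSum_apply, coeff_mul_eq_sum,
      Fintype.sum_prod_type]
    refine Finset.sum_congr rfl fun j _ => ?_
    exact Fintype.sum_equiv (Equiv.mulLeft g) _ _ fun a => by simp [mul_assoc]

@[simp]
lemma regularRep_apply (M : Matrix ι ι (MonoidAlgebra R G)) (p q : ι × G) :
    regularRep R G ι M p q = (M p.1 q.1).coeff (p.2⁻¹ * q.2) := rfl

noncomputable def ofRegularRep (A : Matrix (ι × G) (ι × G) R) :
    Matrix ι ι (MonoidAlgebra R G) :=
  of fun i j => ofCoeff (Finsupp.equivFunOnFinite.symm fun g => A (i, 1) (j, g))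

lemma ofRegularRep_regularRep (M : Matrix ι ι (MonoidAlgebra R G)) :
    ofRegularRep (regularRep R G ι M) = M := by
  ext i j : 2
  simp [ofRegularRep]

lemma mem_range_regularRep_iff {A : Matrix (ι × G) (ι × G) R} :
    A ∈ (regularRep R G ι).range ↔ ∀ k p q, A (p.1, k * p.2) (q.1, k * q.2) = A p q := by
  constructor
  · rintro ⟨M, rfl⟩ k p q
    simp [mul_assoc]
  · intro hA
    refine ⟨ofRegularRep A, ?_⟩
    ext ⟨i, g⟩ ⟨j, h⟩
    simpa [ofRegularRep] using (hA g (i, 1) (j, g⁻¹ * h)).symm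

lemma regularRep_eq_sum (M : Matrix ι ι (MonoidAlgebra R G)) :
    regularRep R G ι M = ∑ i, ∑ j, ∑ t, (M i j).coeff t • regularRepBasis R i j t := by
  ext p q
  simp [sum_apply, regularRepBasis_apply, ite_and]

end Matrix

section

open Matrix Multiplicative

local notation "C₂" => Multiplicative (ZMod 2)

lemma Multiplicative.zmod_two_eq_one_or_eq_ofAdd_one (s : C₂) : s = 1 ∨ s = ofAdd 1 := by
  revert s
  decide

lemma Multiplicative.sum_zmod_two {M : Type*} [AddCommMonoid M] (f : C₂ → M) :
    ∑ t, f t = f 1 + f (ofAdd 1) := by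
  rw [show (Finset.univ : Finset C₂) = {1, ofAdd 1} by decide, Finset.sum_pair (by decide)]

lemma Nat.le_two_mul_self (m : ℕ) : m ≤ 2 * m := by omega

variable {m : ℕ}

lemma Fin.castLE_two_mul_ne_rev (i : Fin m) :
    Fin.castLE (Nat.le_two_mul_self m) i ≠ (Fin.castLE (Nat.le_two_mul_self m) i).rev := by
  rw [Ne, Fin.ext_iff, Fin.val_rev, Fin.val_castLE]
  omega

def centroIndex (p : Fin m × C₂) : Fin (2 * m) :=
  if p.2 = 1 then Fin.castLE (Nat.le_two_mul_self m) p.1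
  else (Fin.castLE (Nat.le_two_mul_self m) p.1).rev

@[simp]
lemma centroIndex_one (i : Fin m) : centroIndex (i, 1) = Fin.castLE (Nat.le_two_mul_self m) i :=
  if_pos rfl

@[simp]
lemma centroIndex_ofAdd_one (i : Fin m) :
    centroIndex (i, ofAdd 1) = (Fin.castLE (Nat.le_two_mul_self m) i).rev :=
  if_neg (show (ofAdd 1 : C₂) ≠ 1 by decide)

lemma centroIndex_ofAdd_one_mul (p : Fin m × C₂) :
    centroIndex (p.1, ofAdd 1 * p.2) = (centroIndex p).rev := by
  obtain ⟨i, s⟩ := p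
  obtain rfl | rfl := zmod_two_eq_one_or_eq_ofAdd_one s
  · simp
  · simp [show (ofAdd 1 * ofAdd 1 : C₂) = 1 by decide]

lemma centroIndex_injective : Function.Injective (centroIndex (m := m)) := by
  rintro ⟨i, s⟩ ⟨j, t⟩ h
  have hi := i.isLt
  have hj := j.isLt
  obtain rfl | rfl := zmod_two_eq_one_or_eq_ofAdd_one s <;>
  obtain rfl | rfl := zmod_two_eq_one_or_eq_ofAdd_one t <;>
  simp only [centroIndex_one, centroIndex_ofAdd_one, Fin.ext_iff, Fin.val_rev,
    Fin.val_castLE] at h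
  · simp [Fin.ext_iff, h]
  · omega
  · omega
  · simp only [Prod.mk.injEq, Fin.ext_iff, and_true]
    omega

noncomputable def centroIndexEquiv (m : ℕ) : Fin m × C₂ ≃ Fin (2 * m) :=
  Equiv.ofBijective centroIndex <|
    (Fintype.bijective_iff_injective_and_card _).2 ⟨centroIndex_injective, by simp [mul_comm]⟩

@[simp]
lemma centroIndexEquiv_apply (p : Fin m × C₂) : centroIndexEquiv m p = centroIndex p := rfl

variable {R : Type*} [Ring R]

lemma submatrix_centroIndex_mem_range_regularRep_iff {A : Matrix (Fin (2 * m)) (Fin (2 * m)) R} :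
    A.submatrix centroIndex centroIndex ∈ (regularRep R C₂ (Fin m)).range ↔
      A ∈ centroSubring R (2 * m) := by
  rw [mem_range_regularRep_iff]
  change _ ↔ ∀ p q, A p q = A p.rev q.rev
  constructor
  · intro hA p q
    obtain ⟨p, rfl⟩ := (centroIndexEquiv m).surjective p
    obtain ⟨q, rfl⟩ := (centroIndexEquiv m).surjective q
    simpa [centroIndex_ofAdd_one_mul] using (hA (ofAdd 1) p q).symm
  · intro hA k p q
    obtain rfl | rfl := zmod_two_eq_one_or_eq_ofAdd_one k
    · simp
    · simp [centroIndex_ofAdd_one_mul, ← hA]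

noncomputable def centroRegularRep :
    Matrix (Fin m) (Fin m) (MonoidAlgebra R C₂) →+* Matrix (Fin (2 * m)) (Fin (2 * m)) R :=
  (reindexRingEquiv R (centroIndexEquiv m)).toRingHom.comp (regularRep R C₂ (Fin m))

lemma centroRegularRep_apply (M : Matrix (Fin m) (Fin m) (MonoidAlgebra R C₂)) :
    centroRegularRep M =
      reindex (centroIndexEquiv m) (centroIndexEquiv m) (regularRep R C₂ (Fin m) M) := rfl

lemma range_centroRegularRep :
    (centroRegularRep (R := R) (m := m)).range = centroSubring R (2 * m) := by
  ext A
  rw [← submatrix_centroIndex_mem_range_regularRep_iff]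
  simp only [RingHom.mem_range, centroRegularRep_apply]
  exact exists_congr fun M => (Equiv.eq_symm_apply _).symm

lemma centroRegularRep_leftInverse :
    Function.LeftInverse (ofRegularRep ∘ (reindex (centroIndexEquiv m) (centroIndexEquiv m)).symm)
      (centroRegularRep (R := R)) := fun M => by
  simp only [centroRegularRep_apply, Function.comp_apply, Equiv.symm_apply_apply,
    ofRegularRep_regularRep]

noncomputable def centroEquiv (R : Type*) [Ring R] (m : ℕ) :
    Matrix (Fin m) (Fin m) (MonoidAlgebra R C₂) ≃+* centroSubring R (2 * m) :=
  (RingEquiv.ofLeftInverse centroRegularRep_leftInverse).trans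
    (RingEquiv.subringCongr range_centroRegularRep)

lemma coe_centroEquiv (M : Matrix (Fin m) (Fin m) (MonoidAlgebra R C₂)) :
    (centroEquiv R m M : Matrix (Fin (2 * m)) (Fin (2 * m)) R) = centroRegularRep M := rfl

lemma fMat_of_ne_rev {n : ℕ} {i : Fin n} (hi : i ≠ i.rev) (j : Fin n) :
    fMat R n i j = single i j 1 + single i.rev j.rev 1 := by
  unfold fMat
  split_ifs with hij
  · subst hij; rfl
  · rfl

lemma reindex_regularRepBasis (i j : Fin m) (t : C₂) :
    reindex (centroIndexEquiv m) (centroIndexEquiv m) (regularRepBasis R i j t) =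
      fMat R (2 * m) (Fin.castLE (Nat.le_two_mul_self m) i) (centroIndex (j, t)) := by
  rw [fMat_of_ne_rev (Fin.castLE_two_mul_ne_rev i), regularRepBasis, sum_zmod_two]
  simp [reindex_apply, submatrix_add, ← centroIndex_ofAdd_one_mul]

end

/-- `S_{2m}(R) ≅ M_m(R[C_2])` as rings, via the map sending the matrix
`(a_{ij} + b_{ij}·x)_{1 ≤ i,j ≤ m}` over `R[C_2]` to `Σ_{i,j} a_{ij}·f_{ij} + b_{ij}·f_{i,2m+1-j}`. -/
theorem centro_even_iso_matrix_groupAlgebra (R : Type*) [Ring R] (m : ℕ) :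
    ∃ φ : Matrix (Fin m) (Fin m) (MonoidAlgebra R (Multiplicative (ZMod 2))) ≃+*
        ↥(centroSubring R (2 * m)),
      ∀ M : Matrix (Fin m) (Fin m) (MonoidAlgebra R (Multiplicative (ZMod 2))),
        (φ M : Matrix (Fin (2 * m)) (Fin (2 * m)) R) =
          ∑ i : Fin m, ∑ j : Fin m,
            (((M i j).coeff : Multiplicative (ZMod 2) →₀ R) (Multiplicative.ofAdd (0 : ZMod 2)) •
                fMat R (2 * m) (Fin.castLE (by omega) i) (Fin.castLE (by omega) j) +
              ((M i j).coeff : Multiplicative (ZMod 2) →₀ R) (Multiplicative.ofAdd (1 : ZMod 2)) •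
                fMat R (2 * m) (Fin.castLE (by omega) i) (Fin.castLE (by omega) j).rev) := by
  refine ⟨centroEquiv R m, fun M => ?_⟩
  rw [coe_centroEquiv, centroRegularRep_apply, Matrix.regularRep_eq_sum,
    ← Matrix.coe_reindexLinearEquiv R R]
  simp only [map_sum, map_smul]
  simp only [Matrix.coe_reindexLinearEquiv, reindex_regularRepBasis]
  simp only [Multiplicative.sum_zmod_two, centroIndex_one, centroIndex_ofAdd_one,
    ofAdd_zero]
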